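/- Let A be an n-dimensional nilpotent complex Leibniz algebra with dim(A/A²) = 1. Then the nilindex of A equals n + 1; that is, A^n ≠ 0 and A^{n+1} = 0, and moreover dim(A^k/A^{k+1}) = 1 for every 1 ≤ k ≤ n. -/

import Mathlib

/-!
If `x` spans `A` modulo `A²`, then `A^{k+1}` is spanned modulo `A^{k+2}` by the single
right-normed power `e_k = [[[x, x], x], …, x]`: expanding `[u, v]` with `u ∈ A^{k+1} + ℂ e_k` and
`v ∈ A² + ℂ x`, every term except `[e_k, x] = e_{k+1}` lies in `A^{k+2}`, the term `[e_k, A²]` by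
the Leibniz identity. So each step of the central series lowers the dimension by at most one,
and nilpotency forces it to drop strictly until it reaches `0`; hence `dim A^{k+1} = n - k`.
-/

/-- A complex Leibniz algebra structure on a vector space `V`: a bilinear bracket
satisfying the Leibniz identity `[x,[y,z]] = [[x,y],z] − [[x,z],y]`. -/
structure LeibnizAlg (V : Type*) [AddCommGroup V] [Module ℂ V] where
  br : V →ₗ[ℂ] V →ₗ[ℂ] V
  leibniz : ∀ x y z : V, br x (br y z) = br (br x y) z - br (br x z) y

namespace LeibnizAlg

variable {V : Type*} [AddCommGroup V] [Module ℂ V]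

/-- The span of all products `[u,v]` with `u ∈ S`, `v ∈ T`. -/
def prodSpan (A : LeibnizAlg V) (S T : Submodule ℂ V) : Submodule ℂ V :=
  Submodule.span ℂ {z : V | ∃ u ∈ S, ∃ v ∈ T, z = A.br u v}

/-- `A.lcs k` is the `(k+1)`-st term `A^{k+1}` of the descending central series:
`A¹ = A`, `A^{k+1} = [A^k, A]`. -/
def lcs (A : LeibnizAlg V) : ℕ → Submodule ℂ V
  | 0 => ⊤
  | k + 1 => A.prodSpan (lcs A k) ⊤

end LeibnizAlg

open Module Submodule

theorem Submodule.exists_sup_span_singleton_eq_top {K V : Type*} [DivisionRing K]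
    [AddCommGroup V] [Module K V] {W : Submodule K V} (h : finrank K (V ⧸ W) = 1) :
    ∃ x : V, W ⊔ K ∙ x = ⊤ := by
  obtain ⟨v, -, hv⟩ := finrank_eq_one_iff'.mp h
  obtain ⟨x, rfl⟩ := W.mkQ_surjective v
  refine ⟨x, ?_⟩
  rw [← comap_map_mkQ, map_span, Set.image_singleton, (span_singleton_eq_top_iff _ _).mpr hv,
    comap_top]

namespace LeibnizAlg

variable {V : Type*} [AddCommGroup V] [Module ℂ V] (A : LeibnizAlg V)

lemma prodSpan_eq_map₂ (S T : Submodule ℂ V) : A.prodSpan S T = map₂ A.br S T := by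
  rw [map₂_eq_span_image2, prodSpan]
  congr 1
  ext z
  exact ⟨fun ⟨u, hu, v, hv, h⟩ => ⟨u, hu, v, hv, h.symm⟩,
    fun ⟨u, hu, v, hv, h⟩ => ⟨u, hu, v, hv, h.symm⟩⟩

lemma lcs_succ (k : ℕ) : A.lcs (k + 1) = map₂ A.br (A.lcs k) ⊤ :=
  A.prodSpan_eq_map₂ _ _

lemma lcs_succ_le : ∀ k, A.lcs (k + 1) ≤ A.lcs k
  | 0 => le_top
  | k + 1 => (A.lcs_succ (k + 1)).trans_le <|
      (map₂_le_map₂_left (lcs_succ_le k)).trans_eq (A.lcs_succ k).symm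

lemma lcs_antitone : Antitone A.lcs :=
  antitone_nat_of_succ_le A.lcs_succ_le

lemma br_mem_lcs_succ {k : ℕ} {u : V} (v : V) (hu : u ∈ A.lcs k) : A.br u v ∈ A.lcs (k + 1) := by
  rw [lcs_succ]
  exact apply_mem_map₂ _ hu mem_top

lemma map_br_lcs_one_le {k : ℕ} {u : V} (hu : u ∈ A.lcs k) :
    (A.lcs 1).map (A.br u) ≤ A.lcs (k + 2) := by
  rw [A.lcs_succ 0, map₂_eq_span_image2, map_span, span_le]
  rintro _ ⟨_, ⟨y, -, z, -, rfl⟩, rfl⟩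
  simp only [A.leibniz]
  exact sub_mem (A.br_mem_lcs_succ z (A.br_mem_lcs_succ y hu))
    (A.br_mem_lcs_succ y (A.br_mem_lcs_succ z hu))

def rightPow (x : V) : ℕ → V
  | 0 => x
  | k + 1 => A.br (rightPow x k) x

lemma rightPow_mem_lcs (x : V) : ∀ k, A.rightPow x k ∈ A.lcs k
  | 0 => mem_top
  | k + 1 => A.br_mem_lcs_succ x (rightPow_mem_lcs x k)

lemma lcs_le_lcs_succ_sup_span_rightPow {x : V} (hx : A.lcs 1 ⊔ ℂ ∙ x = ⊤) :
    ∀ k, A.lcs k ≤ A.lcs (k + 1) ⊔ ℂ ∙ A.rightPow x k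
  | 0 => hx.ge
  | k + 1 => by
    set e := A.rightPow x k
    calc A.lcs (k + 1) = map₂ A.br (A.lcs k) ⊤ := A.lcs_succ k
      _ ≤ map₂ A.br (A.lcs (k + 1) ⊔ ℂ ∙ e) ⊤ :=
        map₂_le_map₂_left (lcs_le_lcs_succ_sup_span_rightPow hx k)
      _ = A.lcs (k + 2) ⊔ ((A.lcs 1).map (A.br e) ⊔ ℂ ∙ A.br e x) := by
        rw [map₂_sup_left, ← lcs_succ, map₂_span_singleton_eq_map, ← hx, Submodule.map_sup,
          map_span, Set.image_singleton]
      _ ≤ A.lcs (k + 2) ⊔ ℂ ∙ A.rightPow x (k + 1) :=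
        sup_le le_sup_left <|
          sup_le (le_sup_of_le_left (A.map_br_lcs_one_le (A.rightPow_mem_lcs x k))) le_sup_right

lemma lcs_eq_of_lcs_succ_eq {k : ℕ} (h : A.lcs (k + 1) = A.lcs k) {m : ℕ} (hm : k ≤ m) :
    A.lcs m = A.lcs k := by
  induction m, hm using Nat.le_induction with
  | base => rfl
  | succ m _ ih => rw [lcs_succ, ih, ← lcs_succ, h]

lemma lcs_succ_lt (hnil : ∃ s, A.lcs s = ⊥) {k : ℕ} (hk : A.lcs k ≠ ⊥) :
    A.lcs (k + 1) < A.lcs k := by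
  refine (A.lcs_succ_le k).lt_of_ne fun h => hk ?_
  obtain ⟨s, hs⟩ := hnil
  rw [← A.lcs_eq_of_lcs_succ_eq h (le_max_left k s), eq_bot_iff, ← hs]
  exact A.lcs_antitone (le_max_right k s)

variable [FiniteDimensional ℂ V]

lemma finrank_lcs_le_finrank_lcs_succ_add_one {x : V} (hx : A.lcs 1 ⊔ ℂ ∙ x = ⊤) (k : ℕ) :
    finrank ℂ (A.lcs k) ≤ finrank ℂ (A.lcs (k + 1)) + 1 :=
  calc finrank ℂ (A.lcs k) ≤ finrank ℂ ↥(A.lcs (k + 1) ⊔ ℂ ∙ A.rightPow x k) :=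
        finrank_mono (A.lcs_le_lcs_succ_sup_span_rightPow hx k)
    _ ≤ finrank ℂ (A.lcs (k + 1)) + finrank ℂ (ℂ ∙ A.rightPow x k) :=
        finrank_add_le_finrank_add_finrank _ _
    _ ≤ finrank ℂ (A.lcs (k + 1)) + 1 :=
        Nat.add_le_add_left ((finrank_le_one_iff_isPrincipal _).mpr ⟨⟨_, rfl⟩⟩) _

lemma finrank_lcs (hnil : ∃ s, A.lcs s = ⊥) {x : V} (hx : A.lcs 1 ⊔ ℂ ∙ x = ⊤) :
    ∀ k, finrank ℂ (A.lcs k) = finrank ℂ V - k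
  | 0 => finrank_top ℂ V
  | k + 1 => by
    have ih := finrank_lcs hnil hx k
    by_cases hk : A.lcs k = ⊥
    · have hk' : A.lcs (k + 1) = ⊥ := eq_bot_iff.mpr (hk ▸ A.lcs_succ_le k)
      rw [hk, finrank_bot] at ih
      rw [hk', finrank_bot]
      omega
    · have hlt := finrank_lt_finrank_of_lt (A.lcs_succ_lt hnil hk)
      have hle := A.finrank_lcs_le_finrank_lcs_succ_add_one hx k
      omega

end LeibnizAlg

/-- An `n`-dimensional nilpotent complex Leibniz algebra with
`dim(A/A²) = 1` has nilindex `n + 1`: `A^n ≠ 0`, `A^{n+1} = 0`, and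
`dim(A^k/A^{k+1}) = 1` for `1 ≤ k ≤ n`.  (Here `A.lcs k = A^{k+1}`.) -/
theorem statement15 {V : Type*} [AddCommGroup V] [Module ℂ V] [FiniteDimensional ℂ V]
    (A : LeibnizAlg V) (n : ℕ)
    (hn : Module.finrank ℂ V = n)
    (hnil : ∃ s, A.lcs s = ⊥)
    (h1 : Module.finrank ℂ (V ⧸ A.lcs 1) = 1) :
    A.lcs (n - 1) ≠ ⊥ ∧ A.lcs n = ⊥ ∧
    ∀ k : ℕ, 1 ≤ k → k ≤ n →
      Module.finrank ℂ (A.lcs (k - 1) ⧸ (A.lcs k).comap (A.lcs (k - 1)).subtype) = 1 := by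
  obtain ⟨x, hx⟩ := exists_sup_span_singleton_eq_top h1
  have hdim := A.finrank_lcs hnil hx
  have hn1 : 1 ≤ n := by
    have := (A.lcs 1).finrank_quotient_le
    omega
  refine ⟨fun h => ?_, finrank_eq_zero.mp (by rw [hdim, hn, Nat.sub_self]), fun k _ hkn => ?_⟩
  · have := hdim (n - 1)
    rw [h, finrank_bot] at this
    omega
  · rw [finrank_quotient, (comapSubtypeEquivOfLe (A.lcs_antitone (Nat.sub_le k 1))).finrank_eq,
      hdim, hdim]
    omega
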